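/- For every atom p, the excluded middle formula p ∨ ¬p is CL-valid but is not E-valid. -/

import Mathlib

/- Formalization of Lorenzen dialogue games, following Felscher's presentation.

   Propositional formulas are built from atoms using ¬, ∧, ∨, →.  A dialogue
   for a formula φ is a sequence of moves beginning with Proponent (P)
   asserting φ at position 0, with O moving at odd positions and P at even
   positions.  Each later move attacks or defends an earlier move of the other
   player, according to the particle rules.  Structural rules (D10, D11, D12,
   D13, E, and the variants D10*, D10′) constrain dialogues further.  P wins
   if P made the last move and no moves are available to O; φ is S-valid if P
   has an S-winning strategy for φ. -/

namespace LorenzenDialogues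

/-- Propositional formulas: atoms, ¬, ∧, ∨, →. -/
inductive Formula : Type
  | atom : ℕ → Formula
  | neg  : Formula → Formula
  | and  : Formula → Formula → Formula
  | or   : Formula → Formula → Formula
  | imp  : Formula → Formula → Formula
deriving DecidableEq

/-- Statements: formulas together with the symbolic attacks `?`, `∧_L`, `∧_R`. -/
inductive Statement : Type
  | form  : Formula → Statement
  | qmark : Statement
  | andL  : Statement
  | andR  : Statement
deriving DecidableEq

/-- Particle rules, attack part: which statements attack which formulas. -/
inductive Attacks : Statement → Formula → Prop
  | andL (a b : Formula) : Attacks .andL (.and a b)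
  | andR (a b : Formula) : Attacks .andR (.and a b)
  | qmark (a b : Formula) : Attacks .qmark (.or a b)
  | imp (a b : Formula) : Attacks (.form a) (.imp a b)
  | neg (a : Formula) : Attacks (.form a) (.neg a)

/-- Particle rules, defense part: `Defends χ a s` means `s` is a permitted
    defense of the formula `χ` against the attack `a`.  (A negation admits
    no defense.) -/
inductive Defends : Formula → Statement → Statement → Prop
  | andL (a b : Formula) : Defends (.and a b) .andL (.form a)
  | andR (a b : Formula) : Defends (.and a b) .andR (.form b)
  | orL (a b : Formula) : Defends (.or a b) .qmark (.form a)
  | orR (a b : Formula) : Defends (.or a b) .qmark (.form b)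
  | imp (a b : Formula) : Defends (.imp a b) (.form a) (.form b)

/-- A move: a statement, a flag recording whether it is an attack (`true`)
    or a defense (`false`), and the position of the earlier move it attacks,
    resp. the earlier attack it defends against. -/
structure Move : Type where
  statement : Statement
  isAttack : Bool
  ref : ℕ
deriving DecidableEq

/-- A dialogue: the initial formula asserted by P at position 0, followed by
    the list of later moves (the move at list index `i` occupies position
    `i + 1`; O moves at odd positions, P at even positions). -/
structure Dialogue : Type where
  initial : Formula
  moves : List Move

/-- The statement asserted at position `n` (if any). -/
def Dialogue.stmtAt (d : Dialogue) (n : ℕ) : Option Statement :=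
  if n = 0 then some (.form d.initial) else (d.moves[n - 1]?).map Move.statement

/-- The move at position `n ≥ 1` (if any); position 0 is the initial assertion,
    not a move. -/
def Dialogue.moveAt (d : Dialogue) (n : ℕ) : Option Move :=
  if n = 0 then none else d.moves[n - 1]?

/-- The move `m`, played at position `n ≥ 1`, is permitted by the particle
    rules: it refers to an earlier position of the other player; if it is an
    attack, it attacks a formula asserted there, and if it is a defense, it
    responds to an attack played there, as the particle rules prescribe. -/
def MoveOK (d : Dialogue) (n : ℕ) (m : Move) : Prop :=
  m.ref < n ∧ m.ref % 2 ≠ n % 2 ∧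
    (m.isAttack = true →
      ∃ ψ, d.stmtAt m.ref = some (.form ψ) ∧ Attacks m.statement ψ) ∧
    (m.isAttack = false →
      ∃ a χ, d.moveAt m.ref = some a ∧ a.isAttack = true ∧
        d.stmtAt a.ref = some (.form χ) ∧ Defends χ a.statement m.statement)

/-- The dialogue adheres to the particle rules (every move is legal). -/
def ParticleOK (d : Dialogue) : Prop :=
  ∀ i m, d.moves[i]? = some m → MoveOK d (i + 1) m

/-- Position `n` carries a defense of the attack made at position `r`. -/
def IsDefenseOf (d : Dialogue) (n r : ℕ) : Prop :=
  ∃ m, d.moveAt n = some m ∧ m.isAttack = false ∧ m.ref = r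

/-- Position `n` carries an attack on the assertion made at position `r`. -/
def IsAttackOn (d : Dialogue) (n r : ℕ) : Prop :=
  ∃ m, d.moveAt n = some m ∧ m.isAttack = true ∧ m.ref = r

/-- Position `n` carries an attack. -/
def IsAttackPos (d : Dialogue) (n : ℕ) : Prop :=
  ∃ m, d.moveAt n = some m ∧ m.isAttack = true

/-- The attack at position `r` is still open (no defense against it has yet
    been played) before position `k`. -/
def OpenAt (d : Dialogue) (r k : ℕ) : Prop :=
  IsAttackPos d r ∧ ¬ ∃ j, j < k ∧ IsDefenseOf d j r

/-- (D10) P may assert an atomic formula only after it has been asserted by O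
    before. -/
def D10 (d : Dialogue) : Prop :=
  ∀ n p, n % 2 = 0 → d.stmtAt n = some (.form (.atom p)) →
    ∃ j, j < n ∧ j % 2 = 1 ∧ d.stmtAt j = some (.form (.atom p))

/-- (D10*) P may assert an atom `p` only if O has asserted `p` or `¬p`
    before. -/
def D10star (d : Dialogue) : Prop :=
  ∀ n p, n % 2 = 0 → d.stmtAt n = some (.form (.atom p)) →
    ∃ j, j < n ∧ j % 2 = 1 ∧
      (d.stmtAt j = some (.form (.atom p)) ∨
        d.stmtAt j = some (.form (.neg (.atom p))))

/-- (D10′) P may assert an atom `p` only if O has asserted `p` or `¬¬p`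
    before. -/
def D10prime (d : Dialogue) : Prop :=
  ∀ n p, n % 2 = 0 → d.stmtAt n = some (.form (.atom p)) →
    ∃ j, j < n ∧ j % 2 = 1 ∧
      (d.stmtAt j = some (.form (.atom p)) ∨
        d.stmtAt j = some (.form (.neg (.neg (.atom p)))))

/-- (D11) When defending, only the most recent open attack may be responded
    to: the attack defended against is open, and no strictly more recent open
    attack (against the same player) exists. -/
def D11 (d : Dialogue) : Prop :=
  ∀ n r, IsDefenseOf d n r →
    OpenAt d r n ∧ ¬ ∃ r', r < r' ∧ r' < n ∧ r' % 2 = r % 2 ∧ OpenAt d r' n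

/-- (D12) An attack may be answered at most once. -/
def D12 (d : Dialogue) : Prop :=
  ∀ n₁ n₂ r, IsDefenseOf d n₁ r → IsDefenseOf d n₂ r → n₁ = n₂

/-- (D13) A P-assertion (made at an even position) may be attacked at most
    once. -/
def D13 (d : Dialogue) : Prop :=
  ∀ n₁ n₂ r, r % 2 = 0 → IsAttackOn d n₁ r → IsAttackOn d n₂ r → n₁ = n₂

/-- (E) O can react only upon the immediately preceding P-statement. -/
def ERule (d : Dialogue) : Prop :=
  ∀ n m, n % 2 = 1 → d.moveAt n = some m → m.ref = n - 1

/-- A ruleset is a set of structural rules, i.e. a predicate on dialogues. -/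
def Ruleset := Dialogue → Prop

/-- Ruleset D = {D10, D11, D12, D13}. -/
def rulesetD : Ruleset := fun d => D10 d ∧ D11 d ∧ D12 d ∧ D13 d

/-- Ruleset E = D ∪ {E}. -/
def rulesetE : Ruleset := fun d => rulesetD d ∧ ERule d

/-- Ruleset CL = E − {D11, D12} = {D10, D13, E}. -/
def rulesetCL : Ruleset := fun d => D10 d ∧ D13 d ∧ ERule d

/-- Ruleset N = D − {D11, D12} = {D10, D13}. -/
def rulesetN : Ruleset := fun d => D10 d ∧ D13 d

/-- Ruleset E* = {D10*, D11, D12, D13, E}. -/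
def rulesetEstar : Ruleset :=
  fun d => D10star d ∧ D11 d ∧ D12 d ∧ D13 d ∧ ERule d

/-- Ruleset E′ = {D10′, D11, D12, D13, E}. -/
def rulesetEprime : Ruleset :=
  fun d => D10prime d ∧ D11 d ∧ D12 d ∧ D13 d ∧ ERule d

/-- An S-dialogue: a dialogue adhering to the particle rules and to the
    structural rules S. -/
def Legal (S : Ruleset) (d : Dialogue) : Prop := ParticleOK d ∧ S d

/-- Extend a dialogue by one move. -/
def Dialogue.extend (d : Dialogue) (m : Move) : Dialogue :=
  ⟨d.initial, d.moves ++ [m]⟩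

/-- The position about to be played. -/
def nextPos (d : Dialogue) : ℕ := d.moves.length + 1

/-- It is P's turn (the next position is even). -/
def PTurn (d : Dialogue) : Prop := nextPos d % 2 = 0

/-- The move `m` legally extends the S-dialogue `d`. -/
def LegalExt (S : Ruleset) (d : Dialogue) (m : Move) : Prop :=
  Legal S (d.extend m)

/-- `PWinningC S C d` holds when P, moving under the additional constraint
    `C` on P's own choices, has a winning strategy in the S-dialogue game
    continuing the dialogue `d`: at P's turn, P has a legal move (satisfying
    `C`) after which P is still winning; at O's turn, every legal O-move
    leads to a position where P is winning (in particular, if no O-move is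
    available, P has won: P made the last move and O cannot move). -/
inductive PWinningC (S : Ruleset) (C : Dialogue → Move → Prop) : Dialogue → Prop
  | pMove (d : Dialogue) (m : Move) (hturn : PTurn d)
      (hm : LegalExt S d m) (hC : C d m)
      (h : PWinningC S C (d.extend m)) : PWinningC S C d
  | oMoves (d : Dialogue) (hturn : ¬ PTurn d)
      (h : ∀ m, LegalExt S d m → PWinningC S C (d.extend m)) :
      PWinningC S C d

/-- P has a winning strategy continuing the S-dialogue `d`. -/
def PWinning (S : Ruleset) (d : Dialogue) : Prop :=
  PWinningC S (fun _ _ => True) d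

/-- `valid S φ` (written `⊨_S φ`): the opening assertion of φ is itself a
    legal S-dialogue and P has an S-winning strategy for φ. -/
def valid (S : Ruleset) (φ : Formula) : Prop :=
  Legal S ⟨φ, []⟩ ∧ PWinning S ⟨φ, []⟩

/-- Derivability in intuitionistic propositional logic (a Hilbert-style
    axiomatization with modus ponens). -/
inductive IProv : Formula → Prop
  | k (a b : Formula) : IProv (.imp a (.imp b a))
  | s (a b c : Formula) :
      IProv (.imp (.imp a (.imp b c)) (.imp (.imp a b) (.imp a c)))
  | andE1 (a b : Formula) : IProv (.imp (.and a b) a)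
  | andE2 (a b : Formula) : IProv (.imp (.and a b) b)
  | andI (a b : Formula) : IProv (.imp a (.imp b (.and a b)))
  | orI1 (a b : Formula) : IProv (.imp a (.or a b))
  | orI2 (a b : Formula) : IProv (.imp b (.or a b))
  | orE (a b c : Formula) :
      IProv (.imp (.imp a c) (.imp (.imp b c) (.imp (.or a b) c)))
  | negI (a b : Formula) :
      IProv (.imp (.imp a b) (.imp (.imp a (.neg b)) (.neg a)))
  | negE (a b : Formula) : IProv (.imp (.neg a) (.imp a b))
  | mp (a b : Formula) : IProv (.imp a b) → IProv a → IProv b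

/-- The stability principle ¬¬p → p for the atom `p`. -/
def stab (p : ℕ) : Formula := .imp (.neg (.neg (.atom p))) (.atom p)

/-- Stable logic: intuitionistic propositional logic plus all instances of
    the stability scheme ¬¬p → p for atoms p, closed under modus ponens. -/
inductive StableProv : Formula → Prop
  | intuit (a : Formula) : IProv a → StableProv a
  | stab (p : ℕ) : StableProv (stab p)
  | mp (a b : Formula) : StableProv (.imp a b) → StableProv a → StableProv b

/-- Boolean evaluation of a formula under a valuation of its atoms. -/
def Formula.eval (v : ℕ → Bool) : Formula → Bool
  | .atom p => v p
  | .neg a => !(a.eval v)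
  | .and a b => a.eval v && b.eval v
  | .or a b => a.eval v || b.eval v
  | .imp a b => !(a.eval v) || b.eval v

/-- A classical tautology: true under every Boolean valuation. -/
def Tautology (φ : Formula) : Prop := ∀ v, φ.eval v = true

/-- Uniform substitution of formulas for atoms, applied homomorphically. -/
def Formula.subst (σ : ℕ → Formula) : Formula → Formula
  | .atom p => σ p
  | .neg a => .neg (a.subst σ)
  | .and a b => .and (a.subst σ) (b.subst σ)
  | .or a b => .or (a.subst σ) (b.subst σ)
  | .imp a b => .imp (a.subst σ) (b.subst σ)

/-- The atoms occurring in a formula. -/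
def Formula.atoms : Formula → List ℕ
  | .atom p => [p]
  | .neg a => a.atoms
  | .and a b => a.atoms ++ b.atoms
  | .or a b => a.atoms ++ b.atoms
  | .imp a b => a.atoms ++ b.atoms

/-- Conjunction of a nonempty list of formulas. -/
def conjList (f : Formula) : List Formula → Formula
  | [] => f
  | g :: gs => .and f (conjList g gs)

/-- The conjunction (¬¬p → p) ∧ … of stability instances for the atoms
    `p :: ps`. -/
def stabConj (p : ℕ) (ps : List ℕ) : Formula :=
  conjList (stab p) (ps.map stab)

/-!
O must open by asking `?`. P cannot answer with `p`, which O has not asserted (D10), so P answers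
`¬p`, and O attacks it by asserting `p`. Under CL, P answers the same `?` once more, now with `p`;
rule (E) lets O react only to that atom, which can be neither attacked nor defended, so O is stuck.
Under E, rule D12 forbids the second answer, a negation has no defense, and neither `?` nor `p` can
be attacked, so P is stuck instead.
-/

namespace Dialogue

variable {d : Dialogue} {m a : Move} {n : ℕ} {s : Statement}

@[simp] lemma extend_initial : (d.extend m).initial = d.initial := rfl

@[simp] lemma extend_moves : (d.extend m).moves = d.moves ++ [m] := rfl

lemma moveAt_eq_some_iff : d.moveAt n = some a ↔ ∃ i, n = i + 1 ∧ d.moves[i]? = some a := by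
  cases n <;> simp [moveAt]

lemma lt_nextPos_of_moveAt_eq_some (h : d.moveAt n = some a) : n < nextPos d := by
  obtain ⟨i, rfl, hi⟩ := moveAt_eq_some_iff.1 h
  have := (List.getElem?_eq_some_iff.1 hi).1
  simp only [nextPos]
  omega

lemma moveAt_eq_none (h : nextPos d ≤ n) : d.moveAt n = none :=
  Option.eq_none_iff_forall_ne_some.2 fun _ ha =>
    absurd (lt_nextPos_of_moveAt_eq_some ha) (not_lt.2 h)

lemma mem_moves_of_moveAt_eq_some (h : d.moveAt n = some a) : a ∈ d.moves := by
  obtain ⟨i, -, hi⟩ := moveAt_eq_some_iff.1 h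
  exact List.mem_of_getElem? hi

lemma stmtAt_eq_map_moveAt (hn : n ≠ 0) : d.stmtAt n = (d.moveAt n).map Move.statement := by
  simp [stmtAt, moveAt, hn]

lemma moveAt_extend_of_lt (h : n < nextPos d) : (d.extend m).moveAt n = d.moveAt n := by
  unfold moveAt nextPos at *
  split_ifs
  · rfl
  · exact List.getElem?_append_left (by omega)

lemma moveAt_extend_nextPos : (d.extend m).moveAt (nextPos d) = some m := by
  simp [moveAt, nextPos]

lemma moveAt_extend_eq_some_iff :
    (d.extend m).moveAt n = some a ↔ d.moveAt n = some a ∨ n = nextPos d ∧ a = m := by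
  rcases lt_trichotomy n (nextPos d) with h | rfl | h
  · simp [moveAt_extend_of_lt h, h.ne]
  · simp [moveAt_extend_nextPos, moveAt_eq_none, eq_comm]
  · rw [moveAt_eq_none h.le, moveAt_eq_none (by simp [nextPos] at h ⊢; omega)]
    simp [h.ne']

lemma stmtAt_extend_eq_some_iff :
    (d.extend m).stmtAt n = some s ↔ d.stmtAt n = some s ∨ n = nextPos d ∧ s = m.statement := by
  rcases eq_or_ne n 0 with rfl | hn
  · simp [stmtAt, nextPos]
  · simp only [stmtAt_eq_map_moveAt hn, Option.map_eq_some_iff, moveAt_extend_eq_some_iff]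
    constructor
    · rintro ⟨a, ha | ⟨rfl, rfl⟩, rfl⟩
      exacts [Or.inl ⟨a, ha, rfl⟩, Or.inr ⟨rfl, rfl⟩]
    · rintro (⟨a, ha, rfl⟩ | ⟨rfl, rfl⟩)
      exacts [⟨a, Or.inl ha, rfl⟩, ⟨m, Or.inr ⟨rfl, rfl⟩, rfl⟩]

end Dialogue

open Dialogue

section

variable {d : Dialogue} {m a : Move} {n r : ℕ}

lemma exists_moveAt_extend_iff {P : Move → Prop} :
    (∃ a, (d.extend m).moveAt n = some a ∧ P a) ↔
      (∃ a, d.moveAt n = some a ∧ P a) ∨ n = nextPos d ∧ P m := by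
  simp only [moveAt_extend_eq_some_iff, or_and_right, exists_or]
  constructor
  · rintro (h | ⟨_, ⟨h, rfl⟩, hP⟩)
    exacts [Or.inl h, Or.inr ⟨h, hP⟩]
  · rintro (h | ⟨h, hP⟩)
    exacts [Or.inl h, Or.inr ⟨m, ⟨h, rfl⟩, hP⟩]

lemma isAttackOn_extend_iff :
    IsAttackOn (d.extend m) n r ↔
      IsAttackOn d n r ∨ n = nextPos d ∧ m.isAttack = true ∧ m.ref = r :=
  exists_moveAt_extend_iff

lemma isDefenseOf_extend_iff :
    IsDefenseOf (d.extend m) n r ↔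
      IsDefenseOf d n r ∨ n = nextPos d ∧ m.isAttack = false ∧ m.ref = r :=
  exists_moveAt_extend_iff

lemma IsAttackOn.exists_mem (h : IsAttackOn d n r) :
    ∃ a ∈ d.moves, a.isAttack = true ∧ a.ref = r :=
  let ⟨a, ha, hatk, href⟩ := h
  ⟨a, mem_moves_of_moveAt_eq_some ha, hatk, href⟩

lemma IsDefenseOf.exists_mem (h : IsDefenseOf d n r) :
    ∃ a ∈ d.moves, a.isAttack = false ∧ a.ref = r :=
  let ⟨a, ha, hdef, href⟩ := h
  ⟨a, mem_moves_of_moveAt_eq_some ha, hdef, href⟩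

lemma openAt_extend_iff (hr : r < nextPos d) (hn : n ≤ nextPos d) :
    OpenAt (d.extend m) r n ↔ OpenAt d r n := by
  unfold OpenAt IsAttackPos IsDefenseOf
  rw [moveAt_extend_of_lt hr]
  refine and_congr_right fun _ => not_congr <| exists_congr fun j => and_congr_right fun hj => ?_
  rw [moveAt_extend_of_lt (hj.trans_le hn)]

lemma MoveOK.extend (h : MoveOK d n a) : MoveOK (d.extend m) n a := by
  obtain ⟨hlt, hpar, hatk, hdef⟩ := h
  refine ⟨hlt, hpar, fun ha => ?_, fun ha => ?_⟩
  · obtain ⟨ψ, hψ, hA⟩ := hatk ha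
    exact ⟨ψ, stmtAt_extend_eq_some_iff.2 (.inl hψ), hA⟩
  · obtain ⟨b, χ, hb, hbatk, hχ, hD⟩ := hdef ha
    exact ⟨b, χ, moveAt_extend_eq_some_iff.2 (.inl hb), hbatk,
      stmtAt_extend_eq_some_iff.2 (.inl hχ), hD⟩

lemma ParticleOK.extend (hd : ParticleOK d) (hm : MoveOK d (nextPos d) m) :
    ParticleOK (d.extend m) := by
  intro i a ha
  rcases moveAt_extend_eq_some_iff.1 (moveAt_eq_some_iff.2 ⟨i, rfl, ha⟩) with ha | ⟨hi, rfl⟩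
  · obtain ⟨j, hj, ha⟩ := moveAt_eq_some_iff.1 ha
    obtain rfl : i = j := by omega
    exact (hd i a ha).extend
  · exact hi ▸ hm.extend

lemma ParticleOK.moveOK_last (h : ParticleOK (d.extend m)) :
    MoveOK (d.extend m) (nextPos d) m :=
  h d.moves.length m (by simp)

lemma D10.extend (hd : D10 d)
    (hm : nextPos d % 2 = 0 → ∀ q, m.statement = .form (.atom q) →
      ∃ j < nextPos d, j % 2 = 1 ∧ d.stmtAt j = some (.form (.atom q))) :
    D10 (d.extend m) := by
  intro n q hn hq
  obtain ⟨j, hj, hjodd, hjq⟩ : ∃ j < n, j % 2 = 1 ∧ d.stmtAt j = some (.form (.atom q)) := by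
    rcases stmtAt_extend_eq_some_iff.1 hq with hold | ⟨rfl, hnew⟩
    exacts [hd n q hn hold, hm hn q hnew.symm]
  exact ⟨j, hj, hjodd, stmtAt_extend_eq_some_iff.2 (.inl hjq)⟩

lemma D11.extend (hd : D11 d)
    (hm : m.isAttack = false → OpenAt d m.ref (nextPos d) ∧
      ¬ ∃ r', m.ref < r' ∧ r' < nextPos d ∧ r' % 2 = m.ref % 2 ∧ OpenAt d r' (nextPos d)) :
    D11 (d.extend m) := by
  have transfer : ∀ n r, n ≤ nextPos d →
      (OpenAt d r n ∧ ¬ ∃ r', r < r' ∧ r' < n ∧ r' % 2 = r % 2 ∧ OpenAt d r' n) →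
      (OpenAt (d.extend m) r n ∧
        ¬ ∃ r', r < r' ∧ r' < n ∧ r' % 2 = r % 2 ∧ OpenAt (d.extend m) r' n) := by
    rintro n r hn ⟨hopen, hlatest⟩
    have hr : r < nextPos d := lt_nextPos_of_moveAt_eq_some hopen.1.choose_spec.1
    refine ⟨(openAt_extend_iff hr hn).2 hopen, fun ⟨r', h₁, h₂, h₃, h₄⟩ => hlatest ?_⟩
    exact ⟨r', h₁, h₂, h₃, (openAt_extend_iff (by omega) hn).1 h₄⟩
  intro n r h
  rcases isDefenseOf_extend_iff.1 h with h | ⟨rfl, ha, rfl⟩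
  · exact transfer n r (lt_nextPos_of_moveAt_eq_some h.choose_spec.1).le (hd n r h)
  · exact transfer _ _ le_rfl (hm ha)

lemma D12.extend (hd : D12 d) (hm : m.isAttack = false → ∀ n, ¬ IsDefenseOf d n m.ref) :
    D12 (d.extend m) := by
  intro n₁ n₂ r h₁ h₂
  rcases isDefenseOf_extend_iff.1 h₁ with h₁ | ⟨rfl, ha₁, rfl⟩ <;>
    rcases isDefenseOf_extend_iff.1 h₂ with h₂ | ⟨rfl, ha₂, hr₂⟩
  · exact hd _ _ _ h₁ h₂
  · exact absurd h₁ (hr₂ ▸ hm ha₂ _)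
  · exact absurd h₂ (hm ha₁ _)
  · rfl

lemma D13.extend (hd : D13 d)
    (hm : m.isAttack = true → m.ref % 2 = 0 → ∀ n, ¬ IsAttackOn d n m.ref) :
    D13 (d.extend m) := by
  intro n₁ n₂ r hr h₁ h₂
  rcases isAttackOn_extend_iff.1 h₁ with h₁ | ⟨rfl, ha₁, rfl⟩ <;>
    rcases isAttackOn_extend_iff.1 h₂ with h₂ | ⟨rfl, ha₂, hr₂⟩
  · exact hd _ _ _ hr h₁ h₂
  · exact absurd h₁ (hr₂ ▸ hm ha₂ (hr₂ ▸ hr) _)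
  · exact absurd h₂ (hm ha₁ hr _)
  · rfl

lemma ERule.extend (hd : ERule d) (hm : nextPos d % 2 = 1 → m.ref = nextPos d - 1) :
    ERule (d.extend m) := by
  intro n a hn ha
  rcases moveAt_extend_eq_some_iff.1 ha with ha | ⟨rfl, rfl⟩
  exacts [hd n a hn ha, hm hn]

end

lemma legal_rulesetE_start {φ : Formula} (hφ : ∀ q, φ ≠ .atom q) :
    Legal rulesetE ⟨φ, []⟩ := by
  have hnone : ∀ n a, (Dialogue.mk φ []).moveAt n ≠ some a := fun n a h => by
    simpa using moveAt_eq_some_iff.1 h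
  refine ⟨fun i a h => by simp at h, ⟨?_, ?_, ?_, ?_⟩, ?_⟩
  · rintro (_ | n) q - h
    · exact absurd (by simpa [stmtAt] using h) (hφ q)
    · simp [stmtAt] at h
  · exact fun n r ⟨a, ha, _⟩ => absurd ha (hnone n a)
  · exact fun n₁ _ _ ⟨a, ha, _⟩ => absurd ha (hnone n₁ a)
  · exact fun n₁ _ _ _ ⟨a, ha, _⟩ => absurd ha (hnone n₁ a)
  · exact fun n a _ ha => absurd ha (hnone n a)

lemma rulesetCL_of_rulesetE {d : Dialogue} (h : rulesetE d) : rulesetCL d :=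
  ⟨h.1.1, h.1.2.2.2, h.2⟩

lemma oMove_attacks_last {d : Dialogue} {m : Move} (hP : ParticleOK (d.extend m))
    (hE : ERule (d.extend m)) (hturn : ¬ PTurn d) (hlast : ¬ IsAttackPos d (nextPos d - 1)) :
    m.isAttack = true ∧ m.ref = nextPos d - 1 ∧
      ∃ ψ, d.stmtAt (nextPos d - 1) = some (.form ψ) ∧ Attacks m.statement ψ := by
  have href : m.ref = nextPos d - 1 :=
    hE _ m (by unfold PTurn at hturn; omega) moveAt_extend_nextPos
  obtain ⟨hlt, -, hatk, hdef⟩ := hP.moveOK_last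
  cases hm : m.isAttack
  · obtain ⟨a, -, ha, hatt, -⟩ := hdef hm
    rw [moveAt_extend_of_lt hlt] at ha
    exact absurd ⟨a, href ▸ ha, hatt⟩ hlast
  · obtain ⟨ψ, hψ, hA⟩ := hatk hm
    rw [stmtAt_extend_eq_some_iff, href] at hψ
    refine ⟨rfl, href, ψ, hψ.resolve_right fun h => ?_, hA⟩
    omega

namespace PWinningC

variable {S : Ruleset} {C : Dialogue → Move → Prop} {d : Dialogue} {m₀ : Move}

lemma of_forced (hturn : ¬ PTurn d) (hforced : ∀ m, LegalExt S d m → m = m₀)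
    (h : PWinningC S C (d.extend m₀)) : PWinningC S C d :=
  oMoves d hturn fun m hm => hforced m hm ▸ h

lemma of_stuck (hturn : ¬ PTurn d) (hstuck : ∀ m, ¬ LegalExt S d m) : PWinningC S C d :=
  oMoves d hturn fun m hm => absurd hm (hstuck m)

lemma extend_of_not_pTurn (h : PWinningC S C d) (hturn : ¬ PTurn d) {m : Move}
    (hm : LegalExt S d m) : PWinningC S C (d.extend m) := by
  cases h with
  | pMove _ _ hP => exact absurd hP hturn
  | oMoves _ _ h => exact h m hm

lemma extend_of_forced (h : PWinningC S C d) (hturn : PTurn d)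
    (hforced : ∀ m, LegalExt S d m → m = m₀) : PWinningC S C (d.extend m₀) := by
  cases h with
  | pMove _ m _ hm _ h => exact hforced m hm ▸ h
  | oMoves _ hO _ => exact absurd hturn hO

lemma not_of_stuck (hturn : PTurn d) (hstuck : ∀ m, ¬ LegalExt S d m) : ¬ PWinningC S C d := by
  rintro (⟨_, m, _, hm⟩ | ⟨_, hO⟩)
  exacts [hstuck m hm, hO hturn]

end PWinningC

section ExcludedMiddle

variable (p : ℕ)

def excludedMiddle : Formula := .or (.atom p) (.neg (.atom p))

def askOr : Move := ⟨.qmark, true, 0⟩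
def defendNeg : Move := ⟨.form (.neg (.atom p)), false, 1⟩
def attackNeg : Move := ⟨.form (.atom p), true, 2⟩
def defendAtom : Move := ⟨.form (.atom p), false, 1⟩

def emStart : Dialogue := ⟨excludedMiddle p, []⟩
def emAsked : Dialogue := (emStart p).extend askOr
def emNegDefended : Dialogue := (emAsked p).extend (defendNeg p)
def emNegAttacked : Dialogue := (emNegDefended p).extend (attackNeg p)
def emAtomDefended : Dialogue := (emNegAttacked p).extend (defendAtom p)

lemma legal_emStart : Legal rulesetE (emStart p) :=
  legal_rulesetE_start fun _ => nofun

lemma legal_emAsked : Legal rulesetE (emAsked p) := by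
  obtain ⟨hP, ⟨h10, h11, h12, h13⟩, hE⟩ := legal_emStart p
  refine ⟨hP.extend ?_, ⟨h10.extend ?_, h11.extend ?_, h12.extend ?_, h13.extend ?_⟩, hE.extend ?_⟩
  · exact ⟨Nat.one_pos, Nat.zero_ne_one, fun _ => ⟨_, rfl, .qmark _ _⟩, nofun⟩
  · exact nofun
  · exact nofun
  · exact nofun
  · exact fun _ _ n h => by simpa [emStart] using h.exists_mem
  · exact fun _ => rfl

lemma legal_emNegDefended : Legal rulesetE (emNegDefended p) := by
  obtain ⟨hP, ⟨h10, h11, h12, h13⟩, hE⟩ := legal_emAsked p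
  have hnodef : ∀ n r, ¬ IsDefenseOf (emAsked p) n r := fun n r h => by
    simpa [emAsked, emStart, askOr] using h.exists_mem
  refine ⟨hP.extend ?_, ⟨h10.extend ?_, h11.extend ?_, h12.extend ?_, h13.extend ?_⟩, hE.extend ?_⟩
  · exact ⟨Nat.one_lt_two, show 1 % 2 ≠ 2 % 2 by decide, nofun,
      fun _ => ⟨askOr, excludedMiddle p, rfl, rfl, rfl, .orR _ _⟩⟩
  · exact fun _ _ => nofun
  · exact fun _ => ⟨⟨⟨askOr, rfl, rfl⟩, fun ⟨j, _, h⟩ => hnodef j 1 h⟩,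
      fun ⟨r', h₁, h₂, _⟩ => by change 1 < r' at h₁; change r' < 2 at h₂; omega⟩
  · exact fun _ n => hnodef n 1
  · exact nofun
  · exact fun h => absurd h (show ¬ 2 % 2 = 1 by decide)

lemma legal_emNegAttacked : Legal rulesetE (emNegAttacked p) := by
  obtain ⟨hP, ⟨h10, h11, h12, h13⟩, hE⟩ := legal_emNegDefended p
  refine ⟨hP.extend ?_, ⟨h10.extend ?_, h11.extend ?_, h12.extend ?_, h13.extend ?_⟩, hE.extend ?_⟩
  · exact ⟨Nat.lt_succ_self 2, show 2 % 2 ≠ 3 % 2 by decide, fun _ => ⟨_, rfl, .neg _⟩, nofun⟩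
  · exact fun h => absurd h (show ¬ 3 % 2 = 0 by decide)
  · exact nofun
  · exact nofun
  · exact fun _ _ n h => by
      simpa [emNegDefended, emAsked, emStart, askOr, defendNeg, attackNeg] using h.exists_mem
  · exact fun _ => rfl

lemma legal_emAtomDefended : Legal rulesetCL (emAtomDefended p) := by
  obtain ⟨hP, h10, h13, hE⟩ := (legal_emNegAttacked p).imp_right rulesetCL_of_rulesetE
  refine ⟨hP.extend ?_, h10.extend ?_, h13.extend ?_, hE.extend ?_⟩
  · exact ⟨show 1 < 4 by decide, show 1 % 2 ≠ 4 % 2 by decide, nofun,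
      fun _ => ⟨askOr, excludedMiddle p, rfl, rfl, rfl, .orL _ _⟩⟩
  · rintro - q ⟨⟩
    exact ⟨3, Nat.lt_succ_self 3, rfl, rfl⟩
  · exact nofun
  · exact fun h => absurd h (show ¬ 4 % 2 = 1 by decide)

variable {p} {m : Move}

lemma LegalExt.eq_askOr (h : LegalExt rulesetCL (emStart p) m) : m = askOr := by
  obtain ⟨hP, -, -, hE⟩ := h
  obtain ⟨s, b, r⟩ := m
  obtain ⟨rfl, rfl, ψ, hψ, hA⟩ := oMove_attacks_last hP hE (show ¬ 1 % 2 = 0 by decide)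
    fun ⟨a, ha, _⟩ => by simp [moveAt, emStart, nextPos] at ha
  obtain rfl := Statement.form.inj (Option.some.inj hψ)
  cases hA
  rfl

lemma LegalExt.eq_attackNeg (h : LegalExt rulesetCL (emNegDefended p) m) : m = attackNeg p := by
  obtain ⟨hP, -, -, hE⟩ := h
  obtain ⟨s, b, r⟩ := m
  obtain ⟨rfl, rfl, ψ, hψ, hA⟩ := oMove_attacks_last hP hE (show ¬ 3 % 2 = 0 by decide)
    fun ⟨a, ha, hatk⟩ => by cases Option.some.inj ha; cases hatk
  obtain rfl := Statement.form.inj (Option.some.inj hψ)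
  cases hA
  rfl

lemma not_legalExt_rulesetCL_emAtomDefended : ¬ LegalExt rulesetCL (emAtomDefended p) m := by
  rintro ⟨hP, -, -, hE⟩
  obtain ⟨s, b, r⟩ := m
  obtain ⟨-, -, ψ, hψ, hA⟩ := oMove_attacks_last hP hE (show ¬ 5 % 2 = 0 by decide)
    fun ⟨a, ha, hatk⟩ => by cases Option.some.inj ha; cases hatk
  obtain rfl := Statement.form.inj (Option.some.inj hψ)
  cases hA

lemma LegalExt.eq_defendNeg (h : LegalExt rulesetE (emAsked p) m) : m = defendNeg p := by
  obtain ⟨hP, ⟨h10, -, -, -⟩, -⟩ := h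
  obtain ⟨s, b, r⟩ := m
  obtain ⟨hlt, hpar, hatk, hdef⟩ := hP.moveOK_last
  obtain rfl : r = 1 := by change r < 2 at hlt; change r % 2 ≠ 2 % 2 at hpar; omega
  cases b
  · obtain ⟨a, χ, ha, -, hχ, hD⟩ := hdef rfl
    obtain rfl := Option.some.inj ha
    obtain rfl := Statement.form.inj (Option.some.inj hχ)
    cases hD with
    | orL =>
      obtain ⟨j, hj, hjodd, hj'⟩ := h10 2 p rfl rfl
      obtain rfl : j = 1 := by change j < 2 at hj; omega
      cases hj'
    | orR => rfl
  · obtain ⟨ψ, hψ, -⟩ := hatk rfl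
    cases hψ

lemma not_legalExt_rulesetE_emNegAttacked : ¬ LegalExt rulesetE (emNegAttacked p) m := by
  rintro ⟨hP, ⟨-, -, h12, -⟩, -⟩
  obtain ⟨s, b, r⟩ := m
  obtain ⟨hlt, hpar, hatk, hdef⟩ := hP.moveOK_last
  obtain rfl | rfl : r = 1 ∨ r = 3 := by change r < 4 at hlt; change r % 2 ≠ 4 % 2 at hpar; omega
  all_goals cases b
  · exact absurd (h12 2 4 1 ⟨defendNeg p, rfl, rfl, rfl⟩ ⟨_, rfl, rfl, rfl⟩) (by decide)
  · obtain ⟨ψ, hψ, -⟩ := hatk rfl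
    cases hψ
  · obtain ⟨a, χ, ha, -, hχ, hD⟩ := hdef rfl
    obtain rfl := Option.some.inj ha
    obtain rfl := Statement.form.inj (Option.some.inj hχ)
    cases hD
  · obtain ⟨ψ, hψ, hA⟩ := hatk rfl
    obtain rfl := Statement.form.inj (Option.some.inj hψ)
    cases hA

variable (p)

lemma pWinning_rulesetCL_emStart : PWinning rulesetCL (emStart p) :=
  .of_forced (show ¬ 1 % 2 = 0 by decide) (fun _ => LegalExt.eq_askOr) <|
  .pMove _ (defendNeg p) (show 2 % 2 = 0 by decide)
    ((legal_emNegDefended p).imp_right rulesetCL_of_rulesetE) trivial <|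
  .of_forced (show ¬ 3 % 2 = 0 by decide) (fun _ => LegalExt.eq_attackNeg) <|
  .pMove _ (defendAtom p) (show 4 % 2 = 0 by decide) (legal_emAtomDefended p) trivial <|
  .of_stuck (show ¬ 5 % 2 = 0 by decide) fun _ => not_legalExt_rulesetCL_emAtomDefended

lemma not_pWinning_rulesetE_emStart : ¬ PWinning rulesetE (emStart p) := by
  intro h
  have hAsked := h.extend_of_not_pTurn (show ¬ 1 % 2 = 0 by decide) (legal_emAsked p)
  have hNegDefended := hAsked.extend_of_forced (show 2 % 2 = 0 by decide)
    fun _ => LegalExt.eq_defendNeg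
  have hNegAttacked := hNegDefended.extend_of_not_pTurn (show ¬ 3 % 2 = 0 by decide)
    (legal_emNegAttacked p)
  exact PWinningC.not_of_stuck (d := emNegAttacked p) (show 4 % 2 = 0 by decide)
    (fun _ => not_legalExt_rulesetE_emNegAttacked) hNegAttacked

end ExcludedMiddle

/-- For every atom p, excluded middle p ∨ ¬p is CL-valid but not E-valid. -/
theorem excluded_middle_CL_valid_not_E_valid (p : ℕ) :
    valid rulesetCL (.or (.atom p) (.neg (.atom p))) ∧
    ¬ valid rulesetE (.or (.atom p) (.neg (.atom p))) :=
  ⟨⟨(legal_emStart p).imp_right rulesetCL_of_rulesetE, pWinning_rulesetCL_emStart p⟩,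
    fun h => not_pWinning_rulesetE_emStart p h.2⟩

end LorenzenDialogues
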